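/- arXiv:1711.01907 — 4 statements merged into one kernel-verified Lean document; each statement's English description precedes it below -/
import Mathlib

section
/- Let R be a commutative ring, q ∈ R, A a commutative R-algebra and y ∈ A. Then in A[ξ], for all m, n ∈ ℕ: ξ^{(m)} ξ^{(n)} = Σ_{i=0}^{min(m,n)} (−1)^i (i)_q! q^{i(i−1)/2} (m choose i)_q (n choose i)_q y^i ξ^{(m+n−i)}. -/
def qInt {R : Type*} [CommRing R] (q : R) (m : ℕ) : R := ∑ i ∈ Finset.range m, q ^ i

def qFact {R : Type*} [CommRing R] (q : R) : ℕ → R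
  | 0 => 1
  | n + 1 => qFact q n * qInt q (n + 1)

def qChoose {R : Type*} [CommRing R] (q : R) : ℕ → ℕ → R
  | _, 0 => 1
  | 0, _ + 1 => 0
  | n + 1, k + 1 => qChoose q n k + q ^ (k + 1) * qChoose q n (k + 1)

noncomputable def twistedPow {A : Type*} [CommRing A] (q y : A) (n : ℕ) : Polynomial A :=
  ∏ i ∈ Finset.range n, (Polynomial.X + Polynomial.C (qInt q i * y))

section Aux

variable {R : Type*} [CommRing R] (q : R)

@[simp] lemma qInt_zero' : qInt q 0 = 0 := by simp [qInt]

lemma qInt_succ' (n : ℕ) : qInt q (n + 1) = qInt q n + q ^ n := by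
  simp [qInt, Finset.sum_range_succ]

lemma qInt_add' (a b : ℕ) : qInt q (a + b) = qInt q a + q ^ a * qInt q b := by
  unfold qInt
  rw [Finset.sum_range_add, Finset.mul_sum]
  simp [pow_add]

@[simp] lemma qChoose_zero_right' (n : ℕ) : qChoose q n 0 = 1 := by cases n <;> rfl

@[simp] lemma qChoose_zero_succ' (k : ℕ) : qChoose q 0 (k + 1) = 0 := rfl

lemma qChoose_succ_succ' (n k : ℕ) :
    qChoose q (n + 1) (k + 1) = qChoose q n k + q ^ (k + 1) * qChoose q n (k + 1) := rfl

lemma qChoose_eq_zero' {n k : ℕ} (h : n < k) : qChoose q n k = 0 := by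
  induction n generalizing k with
  | zero =>
    obtain ⟨j, rfl⟩ : ∃ j, k = j + 1 := ⟨k - 1, by omega⟩
    rfl
  | succ n ih =>
    obtain ⟨j, rfl⟩ : ∃ j, k = j + 1 := ⟨k - 1, by omega⟩
    rw [qChoose_succ_succ', ih (by omega), ih (by omega)]
    ring

lemma qChoose_self' (n : ℕ) : qChoose q n n = 1 := by
  induction n with
  | zero => rfl
  | succ n ih =>
    rw [qChoose_succ_succ', ih, qChoose_eq_zero' q (Nat.lt_succ_self n)]
    ring

lemma qChoose_one_right' (n : ℕ) : qChoose q n 1 = qInt q n := by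
  induction n with
  | zero => simp [qInt]
  | succ n ih =>
    have h1 : qChoose q (n + 1) 1 = qChoose q n 0 + q ^ 1 * qChoose q n 1 := rfl
    have h2 : qInt q (n + 1) = 1 + q * qInt q n := by
      rw [show n + 1 = 1 + n by omega, qInt_add']
      simp [qInt]
    rw [h1, h2, ih, qChoose_zero_right']
    ring

/-- symmetric Pascal rule -/
lemma qChoose_pascal' (n k : ℕ) (h : k ≤ n) :
    qChoose q (n + 1) (k + 1) = q ^ (n - k) * qChoose q n k + qChoose q n (k + 1) := by
  induction n generalizing k with
  | zero =>
    have : k = 0 := by omega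
    subst this
    simp [qChoose_succ_succ']
  | succ n ih =>
    rcases k with _ | k
    · rw [qChoose_one_right', qChoose_one_right', qChoose_zero_right', qInt_succ']
      simp
      ring
    · rcases Nat.lt_or_ge k n with hk | hk
      · have L : qChoose q (n + 1 + 1) (k + 1 + 1) =
            (q ^ (n - k) * qChoose q n k + qChoose q n (k + 1)) +
              q ^ (k + 1 + 1) *
                (q ^ (n - (k + 1)) * qChoose q n (k + 1) + qChoose q n (k + 1 + 1)) := by
          rw [qChoose_succ_succ', ih k (by omega), ih (k + 1) (by omega)]
        have Rr : q ^ (n + 1 - (k + 1)) * qChoose q (n + 1) (k + 1) +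
              qChoose q (n + 1) (k + 1 + 1) =
            q ^ (n - k) * (qChoose q n k + q ^ (k + 1) * qChoose q n (k + 1)) +
              (qChoose q n (k + 1) + q ^ (k + 1 + 1) * qChoose q n (k + 1 + 1)) := by
          rw [qChoose_succ_succ', qChoose_succ_succ', show n + 1 - (k + 1) = n - k by omega]
        rw [L, Rr]
        have hp : q ^ (k + 1 + 1) * q ^ (n - (k + 1)) = q ^ (n - k) * q ^ (k + 1) := by
          rw [← pow_add, ← pow_add]
          congr 1
          omega
        linear_combination qChoose q n (k + 1) * hp
      · have : k = n := by omega
        subst this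
        rw [qChoose_self', qChoose_self', qChoose_eq_zero' q (by omega)]
        simp

/-- absorption identity -/
lemma qChoose_absorb' (m k : ℕ) :
    qInt q (k + 1) * qChoose q m (k + 1) = qInt q (m - k) * qChoose q m k := by
  induction m generalizing k with
  | zero => simp
  | succ m ih =>
    rcases k with _ | k
    · rw [qChoose_one_right', qChoose_zero_right']
      simp [qInt]
    · rw [qChoose_succ_succ', qChoose_succ_succ']
      by_cases hkm : k < m
      · have h1 := ih (k + 1)
        have h2 := ih k
        have s : qInt q (k + 1 + 1) + q ^ (k + 1 + 1) * qInt q (m - (k + 1)) =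
            qInt q (k + 1) + q ^ (k + 1) * qInt q (m - k) := by
          rw [← qInt_add', ← qInt_add']
          congr 1
          omega
        rw [show m + 1 - (k + 1) = m - k by omega]
        linear_combination q ^ (k + 1 + 1) * h1 + h2 + qChoose q m (k + 1) * s
      · have h1 : qChoose q m (k + 1) = 0 := qChoose_eq_zero' q (by omega)
        have h2 : qChoose q m (k + 1 + 1) = 0 := qChoose_eq_zero' q (by omega)
        have h0 : m + 1 - (k + 1) = 0 := by omega
        rw [h1, h2, h0]
        simp

lemma tri_aux (k : ℕ) : (k + 1) * (k + 1 - 1) / 2 = k * (k - 1) / 2 + k := by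
  rcases k with _ | j
  · rfl
  · rw [Nat.add_sub_cancel, Nat.add_sub_cancel]
    have h2 : (j + 1 + 1) * (j + 1) = (j + 1) * j + 2 * (j + 1) := by ring
    rw [h2, Nat.add_mul_div_left _ _ (by norm_num : 0 < 2)]

end Aux

section Main

variable {A : Type*} [CommRing A]

@[simp] lemma tp_zero' (q y : A) : twistedPow q y 0 = 1 := Finset.prod_range_zero _

lemma tp_succ' (q y : A) (n : ℕ) :
    twistedPow q y (n + 1) =
      twistedPow q y n * (Polynomial.X + Polynomial.C (qInt q n * y)) :=
  Finset.prod_range_succ _ _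

def tpCoef (q y : A) (m n i : ℕ) : A :=
  (-1) ^ i * qFact q i * q ^ (i * (i - 1) / 2) * qChoose q m i * qChoose q n i * y ^ i

lemma tpCoef_rec (q y : A) (m n k : ℕ) (hk : k ≤ n) :
    tpCoef q y m (n + 1) (k + 1) =
      tpCoef q y m n (k + 1) +
        tpCoef q y m n k * ((qInt q n - qInt q (m + n - k)) * y) := by
  by_cases hm : k ≤ m
  · have e1 : qInt q (m + n - k) = qInt q n + q ^ n * qInt q (m - k) := by
      rw [show m + n - k = n + (m - k) by omega, qInt_add']
    unfold tpCoef
    rw [qChoose_pascal' q n k hk, e1]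
    have habs := qChoose_absorb' q m k
    have hfact : qFact q (k + 1) = qFact q k * qInt q (k + 1) := rfl
    have hpow : q ^ ((k + 1) * (k + 1 - 1) / 2) * q ^ (n - k) = q ^ (k * (k - 1) / 2) * q ^ n := by
      rw [← pow_add, ← pow_add]
      congr 1
      have h := tri_aux k
      omega
    rw [hfact]
    linear_combination
      (-(-1 : A) ^ k * qFact q k * q ^ ((k + 1) * (k + 1 - 1) / 2) * q ^ (n - k) *
          qChoose q n k * y ^ (k + 1)) * habs +
        (-(-1 : A) ^ k * qFact q k * qChoose q n k * qInt q (m - k) * qChoose q m k *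
          y ^ (k + 1)) * hpow
  · have h1 : qChoose q m k = 0 := qChoose_eq_zero' q (by omega)
    have h2 : qChoose q m (k + 1) = 0 := qChoose_eq_zero' q (by omega)
    simp [tpCoef, h1, h2]

lemma twistedPow_mul (q y : A) (m n : ℕ) :
    twistedPow q y m * twistedPow q y n =
      ∑ i ∈ Finset.range (n + 1),
        Polynomial.C (tpCoef q y m n i) * twistedPow q y (m + n - i) := by
  induction n with
  | zero => simp [tpCoef, qFact]
  | succ n ih =>
    rw [tp_succ', ← mul_assoc, ih, Finset.sum_mul]
    have hsplit : ∀ i ∈ Finset.range (n + 1),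
        Polynomial.C (tpCoef q y m n i) * twistedPow q y (m + n - i) *
            (Polynomial.X + Polynomial.C (qInt q n * y)) =
          Polynomial.C (tpCoef q y m n i) * twistedPow q y (m + (n + 1) - i) +
            Polynomial.C (tpCoef q y m n i * ((qInt q n - qInt q (m + n - i)) * y)) *
              twistedPow q y (m + n - i) := by
      intro i hi
      simp only [Finset.mem_range] at hi
      rw [show m + (n + 1) - i = (m + n - i) + 1 by omega, tp_succ']
      simp only [map_mul, map_sub]
      ring
    rw [Finset.sum_congr rfl hsplit, Finset.sum_add_distrib]
    have hF : ∑ i ∈ Finset.range (n + 1),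
          Polynomial.C (tpCoef q y m n i) * twistedPow q y (m + (n + 1) - i) =
        ∑ i ∈ Finset.range (n + 1 + 1),
          Polynomial.C (tpCoef q y m n i) * twistedPow q y (m + (n + 1) - i) := by
      conv_rhs => rw [Finset.sum_range_succ]
      have hz : qChoose q n (n + 1) = 0 := qChoose_eq_zero' q (Nat.lt_succ_self n)
      have h0 : tpCoef q y m n (n + 1) = 0 := by simp [tpCoef, hz]
      rw [h0]
      simp
    have hG : ∑ i ∈ Finset.range (n + 1),
          Polynomial.C (tpCoef q y m n i * ((qInt q n - qInt q (m + n - i)) * y)) *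
            twistedPow q y (m + n - i) =
        ∑ j ∈ Finset.range (n + 1 + 1),
          (if j = 0 then 0 else
            Polynomial.C (tpCoef q y m n (j - 1) *
                ((qInt q n - qInt q (m + n - (j - 1))) * y)) *
              twistedPow q y (m + n - (j - 1))) := by
      conv_rhs => rw [Finset.sum_range_succ']
      simp
    rw [hF, hG, ← Finset.sum_add_distrib]
    refine (Finset.sum_congr rfl ?_).symm
    intro j hj
    simp only [Finset.mem_range] at hj
    rcases j with _ | k
    · simp [tpCoef]
    · have hk : k ≤ n := by omega
      simp only [Nat.add_sub_cancel, if_neg (Nat.succ_ne_zero k)]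
      rw [show m + (n + 1) - (k + 1) = m + n - k by omega, tpCoef_rec q y m n k hk,
        map_add, add_mul]

end Main

/-- Multiplication formula for twisted powers:
`ξ^{(m)} ξ^{(n)} = Σ_{i=0}^{min(m,n)} (−1)^i (i)_q! q^{i(i−1)/2} (m choose i)_q (n choose i)_q
y^i ξ^{(m+n−i)}`. -/
theorem statement1 {R A : Type*} [CommRing R] [CommRing A] [Algebra R A] (q : R) (y : A)
    (m n : ℕ) :
    twistedPow (algebraMap R A q) y m * twistedPow (algebraMap R A q) y n =
      ∑ i ∈ Finset.range (min m n + 1),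
        Polynomial.C ((-1 : A) ^ i * qFact (algebraMap R A q) i *
            (algebraMap R A q) ^ (i * (i - 1) / 2) *
            qChoose (algebraMap R A q) m i * qChoose (algebraMap R A q) n i * y ^ i) *
          twistedPow (algebraMap R A q) y (m + n - i) := by
  rw [twistedPow_mul]
  simp only [tpCoef]
  refine (Finset.sum_subset (Finset.range_subset_range.mpr (by omega)) ?_).symm
  intro i hi hni
  simp only [Finset.mem_range] at hi hni
  have hmi : m < i := by omega
  rw [qChoose_eq_zero' _ hmi]
  simp
end

section
/- Let R be a commutative ring and q ∈ R. Assume the q-characteristic of R is p > 0 and that R is q-flat. Then for every i ∈ ℕ one has (−1)^{ip} = (−1)^i q^{ip(ip−1)/2} in R. -/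
private lemma two_dvd_mul_pred (n : ℕ) : 2 ∣ n * (n - 1) := by
  rcases n with _ | m
  · simp
  · simpa [Nat.succ_sub_one, mul_comm] using (Nat.even_mul_succ_self m).two_dvd

private lemma exp_step (p : ℕ) (hp : 0 < p) (n : ℕ) :
    (n + p) * (n + p - 1) / 2 = n * (n - 1) / 2 + p * (p - 1) / 2 + n * p := by
  obtain ⟨a, ha⟩ := two_dvd_mul_pred n
  obtain ⟨b, hb⟩ := two_dvd_mul_pred p
  have key : (n + p) * (n + p - 1) = 2 * (a + b + n * p) := by
    obtain ⟨p', rfl⟩ : ∃ p', p = p' + 1 := ⟨p - 1, by omega⟩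
    have hb' : (p' + 1) * p' = 2 * b := by simpa using hb
    rcases n with _ | m
    · have ha' : a = 0 := by simpa using ha.symm
      subst ha'
      simpa using hb'
    · have ha' : (m + 1) * m = 2 * a := by simpa using ha
      have h2 : m + 1 + (p' + 1) - 1 = m + p' + 1 := by omega
      rw [h2]
      zify at ha' hb' ⊢
      linear_combination ha' + hb'
  rw [key, ha, hb, Nat.mul_div_cancel_left _ (by norm_num : 0 < 2),
    Nat.mul_div_cancel_left _ (by norm_num : 0 < 2),
    Nat.mul_div_cancel_left _ (by norm_num : 0 < 2)]

/-- If `R` has `q`-characteristic `p > 0` and is `q`-flat, then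
`(−1)^{ip} = (−1)^i q^{ip(ip−1)/2}` for all `i ∈ ℕ`. -/
theorem statement6 {R : Type*} [CommRing R] (q : R) (p : ℕ)
    (hp : 0 < p) (hp0 : qInt q p = 0) (hmin : ∀ m : ℕ, 0 < m → m < p → qInt q m ≠ 0)
    (hflat : ∀ m : ℕ, qInt q m = 0 ∨ IsRegular (qInt q m)) :
    ∀ i : ℕ, (-1 : R) ^ (i * p) = (-1 : R) ^ i * q ^ (i * p * (i * p - 1) / 2) := by
  -- q ^ p = 1
  have hq1 : q ^ p = 1 := by
    have h := geom_sum_mul q p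
    rw [show (∑ i ∈ Finset.range p, q ^ i) = qInt q p from rfl, hp0, zero_mul] at h
    linear_combination -h
  -- key : (-1)^p = - q^(p*(p-1)/2)
  have key : (-1 : R) ^ p = - q ^ (p * (p - 1) / 2) := by
    rcases Nat.even_or_odd p with he | ho
    · -- p even, p = 2k
      obtain ⟨k, hk⟩ := he
      have hk0 : 0 < k := by omega
      have hqk : q ^ k = -1 := by
        have hsplit : qInt q p = (1 + q ^ k) * qInt q k := by
          rw [hk]
          unfold qInt
          rw [Finset.sum_range_add]
          simp only [pow_add]
          rw [← Finset.mul_sum]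
          ring
        have hreg : IsRegular (qInt q k) := by
          rcases hflat k with h | h
          · exact absurd h (hmin k hk0 (by omega))
          · exact h
        have h0 : (1 + q ^ k) * qInt q k = 0 * qInt q k := by
          rw [zero_mul, ← hsplit, hp0]
        have h1 := hreg.right h0
        linear_combination h1
      have hexp : p * (p - 1) / 2 = k * (p - 1) := by
        have : p * (p - 1) = 2 * (k * (p - 1)) := by rw [hk]; ring
        rw [this, Nat.mul_div_cancel_left _ (by norm_num : 0 < 2)]
      rw [hexp, pow_mul, hqk]
      have hodd : Odd (p - 1) := by
        refine Nat.Even.sub_odd (by omega) ⟨k, hk⟩ odd_one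
      rw [hodd.neg_one_pow, Even.neg_one_pow ⟨k, hk⟩]
      ring
    · -- p odd
      have hexp : p * (p - 1) / 2 = p * ((p - 1) / 2) := by
        refine Nat.mul_div_assoc p ?_
        have : Even (p - 1) := Nat.Odd.sub_odd ho odd_one
        exact this.two_dvd
      rw [hexp, pow_mul, hq1, one_pow, ho.neg_one_pow]
  -- main induction
  intro i
  induction i with
  | zero => simp
  | succ i ih =>
    have hstep : (i + 1) * p * ((i + 1) * p - 1) / 2
        = i * p * (i * p - 1) / 2 + p * (p - 1) / 2 + i * p * p := by
      have h := exp_step p hp (i * p)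
      have h2 : (i + 1) * p = i * p + p := by ring
      rw [h2, h]
    have hqq : q ^ (i * p * p) = 1 := by
      rw [show i * p * p = p * (i * p) by ring, pow_mul, hq1, one_pow]
    rw [hstep, pow_add, pow_add, hqq, mul_one, add_mul, one_mul, pow_add, ih, pow_succ, key]
    ring
end

section
/- Let R be a commutative ring, A a commutative R-algebra and y ∈ A (the case q = 1). Then: (1) the A-linear map δ : A⟨ω⟩_{1,y} → A⟨ω⟩_{1,y} ⊗_A A⟨ω⟩_{1,y} determined by δ(ω^{[n]}) = Σ_{i=0}^{n} ω^{[i]} ⊗ ω^{[n−i]} is a morphism of A-algebras; (2) for every k ∈ ℕ, in A[θ] ⊗_A A[θ] one has (1 ⊗ θ + θ ⊗ 1 − y θ ⊗ θ)^k = Σ_{m,n,i with m+n−i=k, 0 ≤ i ≤ m ≤ k} (−1)^i (k choose m)(m choose i) y^i θ^m ⊗ θ^n, where the binomial coefficients are the ordinary ones. -/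
/-!
Write `c k m n` for the coefficient of `X^m Y^n` in `(X + Y - yXY)^k`. Expanding
`(X + Y - yXY)^k = (X(1 - yY) + Y)^k` binomially, once in `A[X][Y]` and once in
`A[θ] ⊗ A[θ]` (this is part (2)), shows that `c (m + n - i) m n` is the coefficient of
`ω^{[m+n-i]}` in `ω^{[m]} ω^{[n]}`: the `c k m n` are the structure constants of
`A⟨ω⟩_{1,y}`. Comparing coefficients of `ω^{[s]} ⊗ ω^{[t]}` in `δ(ω^{[m]} ω^{[n]})` and
`δ(ω^{[m]}) δ(ω^{[n]})`, multiplicativity of `δ` becomes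
`c (s + t) m n = ∑ c s i j * c t (m - i) (n - j)`, which is
`(X + Y - yXY)^(s+t) = (X + Y - yXY)^s (X + Y - yXY)^t` read coefficientwise.
-/

open TensorProduct

def dpCoeff {A : Type*} [CommRing A] (q y : A) (m n i : ℕ) : A :=
  (-1 : A) ^ i * q ^ (i * (i - 1) / 2) * qChoose q (m + n - i) m * qChoose q m i * y ^ i

section

open Polynomial Finset

theorem add_sub_smul_mul_pow {A T : Type*} [CommRing A] [CommRing T] [Algebra A T]
    (y : A) (u v : T) (k : ℕ) :
    (u + v - y • (v * u)) ^ k = ∑ m ∈ range (k + 1), ∑ i ∈ range (m + 1),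
      ((-1) ^ i * k.choose m * m.choose i * y ^ i) • (v ^ m * u ^ (k - m + i)) := by
  have hsplit : u + v - y • (v * u) = v * (1 + (-y) • u) + u := by
    rw [neg_smul, mul_add, mul_neg, mul_smul_comm]; ring
  rw [hsplit, add_pow]
  refine sum_congr rfl fun m _ => ?_
  rw [mul_pow, add_comm 1, add_pow, mul_sum, sum_mul, sum_mul]
  refine sum_congr rfl fun i _ => ?_
  simp only [one_pow, mul_one, Algebra.smul_def, map_mul, map_pow, map_neg, map_one,
    map_natCast, pow_add]
  ring

theorem sum_range_diag_flip_eq_sum_range_sum_range {M : Type*} [AddCommMonoid M] (N : ℕ)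
    (f : ℕ → ℕ → M) (hf : ∀ s t, N < s + t → f s t = 0) :
    ∑ k ∈ range (N + 1), ∑ s ∈ range (k + 1), f s (k - s) =
      ∑ s ∈ range (N + 1), ∑ t ∈ range (N + 1), f s t := by
  rw [sum_range_diag_flip]
  refine sum_congr rfl fun s hs => sum_subset (range_subset_range.2 (by omega)) fun t _ ht => ?_
  simp only [mem_range] at hs ht
  exact hf s t (by omega)

variable {A : Type*} [CommRing A]

theorem one_tmul_add_tmul_one_sub_smul_tmul_pow {T : Type*} [CommRing T] [Algebra A T]
    (y : A) (x : T) (k : ℕ) :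
    ((1 : T) ⊗ₜ[A] x + x ⊗ₜ[A] (1 : T) - y • (x ⊗ₜ[A] x)) ^ k =
      ∑ m ∈ range (k + 1), ∑ i ∈ range (m + 1),
        ((-1) ^ i * k.choose m * m.choose i * y ^ i) • ((x ^ m) ⊗ₜ[A] (x ^ (k - m + i))) := by
  have hx : x ⊗ₜ[A] x = (x ⊗ₜ[A] (1 : T)) * ((1 : T) ⊗ₜ[A] x) := by
    rw [Algebra.TensorProduct.tmul_mul_tmul, mul_one, one_mul]
  rw [hx, add_sub_smul_mul_pow]
  simp only [Algebra.TensorProduct.tmul_pow, one_pow,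
    Algebra.TensorProduct.tmul_mul_tmul, mul_one, one_mul]

/-- `X + Y - yXY` in `A[X][Y]`, with `X = C X` the inner and `Y = X` the outer variable. -/
noncomputable def comulPoly (y : A) : A[X][X] := X + C X - y • (C X * X)

noncomputable def structConst (y : A) (k m n : ℕ) : A := ((comulPoly y ^ k).coeff n).coeff m

theorem structConst_eq (y : A) (k m n : ℕ) : structConst y k m n =
    if m ≤ k ∧ n ≤ k ∧ k ≤ m + n then
      (-1) ^ (m + n - k) * k.choose m * m.choose (m + n - k) * y ^ (m + n - k) else 0 := by
  simp only [structConst, comulPoly, add_sub_smul_mul_pow, finsetSum_coeff, coeff_smul,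
    ← C_pow, coeff_C_mul_X_pow, apply_ite (coeff · m), coeff_X_pow, coeff_zero,
    smul_eq_mul, mul_ite, mul_one, mul_zero]
  by_cases h : m ≤ k ∧ n ≤ k ∧ k ≤ m + n
  · rw [if_pos h, sum_eq_single_of_mem m (by simp; omega), sum_eq_single_of_mem (m + n - k)
      (by simp; omega), if_pos (by omega), if_pos rfl]
    · intro i _ hi
      rw [if_neg (by omega)]
    · intro m' _ hm'
      exact sum_eq_zero fun i _ => by rw [if_neg (Ne.symm hm'), ite_self]
  · rw [if_neg h]
    refine sum_eq_zero fun m' hm' => sum_eq_zero fun i hi => ?_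
    simp only [mem_range] at hm' hi
    split_ifs <;> first | rfl | omega

theorem structConst_eq_zero_of_add_lt (y : A) {k m n : ℕ} (h : m + n < k) :
    structConst y k m n = 0 := by
  rw [structConst_eq, if_neg (by omega)]

theorem structConst_add (y : A) (s t m n : ℕ) : structConst y (s + t) m n =
    ∑ i ∈ range (m + 1), ∑ j ∈ range (n + 1),
      structConst y s i j * structConst y t (m - i) (n - j) := by
  simp only [structConst, pow_add, coeff_mul, finsetSum_coeff,
    Nat.sum_antidiagonal_eq_sum_range_succ_mk]
  exact sum_comm

theorem qChoose_one : ∀ n k : ℕ, qChoose (1 : A) n k = n.choose k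
  | _, 0 => by simp [qChoose]
  | 0, k + 1 => by simp [qChoose]
  | n + 1, k + 1 => by
    rw [qChoose, qChoose_one n k, qChoose_one n (k + 1), Nat.choose_succ_succ]
    push_cast
    ring

theorem sum_structConst_smul {M : Type*} [AddCommMonoid M] [Module A M] (y : A) (b : ℕ → M)
    (m n : ℕ) : ∑ k ∈ range (m + n + 1), structConst y k m n • b k =
      ∑ i ∈ range (min m n + 1), dpCoeff 1 y m n i • b (m + n - i) := by
  rw [← sum_range_reflect, add_tsub_cancel_right]
  refine (sum_subset (range_subset_range.2 (by omega)) fun i hi hi' => ?_).symm.trans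
    (sum_congr rfl fun i hi => ?_)
  · simp only [mem_range] at hi hi'
    rw [structConst_eq, if_neg (by omega), zero_smul]
  · simp only [mem_range] at hi
    rw [structConst_eq, if_pos (by omega), dpCoeff, qChoose_one, qChoose_one,
      show m + n - (m + n - i) = i by omega, one_pow, mul_one]

section StructureConstants

variable {B : Type*} [Semiring B] [Algebra A B] {c : ℕ → ℕ → ℕ → A} {b : ℕ → B}

theorem mul_eq_sum_range_of_le (hc : ∀ k m n, m + n < k → c k m n = 0)
    (hmul : ∀ m n, b m * b n = ∑ k ∈ range (m + n + 1), c k m n • b k)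
    {m n N : ℕ} (h : m + n ≤ N) : b m * b n = ∑ k ∈ range (N + 1), c k m n • b k := by
  rw [hmul]
  refine sum_subset (range_subset_range.2 (by omega)) fun k _ hk => ?_
  rw [hc k m n (by simpa using hk), zero_smul]

theorem map_mul_of_structConst (hc : ∀ k m n, m + n < k → c k m n = 0)
    (hc_add : ∀ s t m n, c (s + t) m n =
      ∑ i ∈ range (m + 1), ∑ j ∈ range (n + 1), c s i j * c t (m - i) (n - j))
    (hmul : ∀ m n, b m * b n = ∑ k ∈ range (m + n + 1), c k m n • b k)
    {δ : B →ₗ[A] B ⊗[A] B}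
    (hδ : ∀ n, δ (b n) = ∑ i ∈ range (n + 1), b i ⊗ₜ b (n - i)) (m n : ℕ) : δ (b m * b n) = δ (b m) * δ (b n) := by
  have hlhs : δ (b m * b n) = ∑ s ∈ range (m + n + 1), ∑ t ∈ range (m + n + 1),
      c (s + t) m n • b s ⊗ₜ b t := by
    rw [← sum_range_diag_flip_eq_sum_range_sum_range _ _
      fun s t h => by rw [hc _ _ _ h, zero_smul], hmul, map_sum]
    refine sum_congr rfl fun k _ => ?_
    rw [map_smul, hδ, smul_sum]
    refine sum_congr rfl fun s hs => ?_
    rw [Nat.add_sub_cancel' (by simpa [Nat.lt_succ_iff] using hs)]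
  have hrhs : δ (b m) * δ (b n) = ∑ i ∈ range (m + 1), ∑ j ∈ range (n + 1),
      ∑ s ∈ range (m + n + 1), ∑ t ∈ range (m + n + 1),
        (c s i j * c t (m - i) (n - j)) • b s ⊗ₜ b t := by
    rw [hδ, hδ, sum_mul_sum]
    refine sum_congr rfl fun i hi => sum_congr rfl fun j hj => ?_
    simp only [mem_range] at hi hj
    rw [Algebra.TensorProduct.tmul_mul_tmul,
      mul_eq_sum_range_of_le hc hmul (by omega : i + j ≤ m + n),
      mul_eq_sum_range_of_le hc hmul (by omega : m - i + (n - j) ≤ m + n), sum_tmul]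
    simp only [tmul_sum, smul_tmul_smul]
  simp only [hlhs, hrhs, hc_add, sum_smul]
  -- reorder `∑ s, ∑ t, ∑ i, ∑ j` as `∑ i, ∑ j, ∑ s, ∑ t`
  exact ((sum_congr rfl fun _ _ => sum_comm).trans sum_comm).trans
    (sum_congr rfl fun _ _ => (sum_congr rfl fun _ _ => sum_comm).trans sum_comm)

end StructureConstants

namespace Module.Basis

variable {ι B C : Type*} [Semiring B] [Algebra A B] [Semiring C] [Algebra A C]

theorem eq_one_of_mul_basis (b : Basis ι A B) {e : B} (h : ∀ i, e * b i = b i) : e = 1 := by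
  have hmulLeft : LinearMap.mulLeft A e = LinearMap.id := b.ext h
  simpa using LinearMap.congr_fun hmulLeft 1

theorem map_mul_of_map_mul_basis (b : Basis ι A B) {f : B →ₗ[A] C}
    (h : ∀ i j, f (b i * b j) = f (b i) * f (b j)) (x z : B) : f (x * z) = f x * f z :=
  (LinearMap.map_mul_iff f).2 (LinearMap.ext_basis b b h) x z

end Module.Basis

end

theorem statement7_general {A B : Type*} [CommRing A]
    [CommRing B] [Algebra A B] (y : A)
    (b : Module.Basis ℕ A B)
    (hb : ∀ m n : ℕ, b m * b n = ∑ i ∈ Finset.range (min m n + 1),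
      dpCoeff (1 : A) y m n i • b (m + n - i)) :
    (∃ δ : B →ₐ[A] B ⊗[A] B,
      ∀ n : ℕ, δ (b n) = ∑ i ∈ Finset.range (n + 1), b i ⊗ₜ[A] b (n - i)) ∧
    (∀ k : ℕ,
      ((1 : Polynomial A) ⊗ₜ[A] (Polynomial.X : Polynomial A) +
          (Polynomial.X : Polynomial A) ⊗ₜ[A] (1 : Polynomial A) -
          y • ((Polynomial.X : Polynomial A) ⊗ₜ[A] (Polynomial.X : Polynomial A))) ^ k =
        ∑ m ∈ Finset.range (k + 1), ∑ i ∈ Finset.range (m + 1),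
          ((-1 : A) ^ i * (k.choose m : A) * (m.choose i : A) * y ^ i) •
            (((Polynomial.X : Polynomial A) ^ m) ⊗ₜ[A]
              ((Polynomial.X : Polynomial A) ^ (k - m + i)))) := by
  have hmul (m n : ℕ) :
      b m * b n = ∑ k ∈ Finset.range (m + n + 1), structConst y k m n • b k := by
    rw [hb, sum_structConst_smul]
  have hone : b 0 = 1 :=
    b.eq_one_of_mul_basis fun n => by simpa [dpCoeff, qChoose_one] using hb 0 n
  let δ := b.constr A fun n => ∑ i ∈ Finset.range (n + 1), b i ⊗ₜ[A] b (n - i)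
  have hδ (n : ℕ) : δ (b n) = ∑ i ∈ Finset.range (n + 1), b i ⊗ₜ[A] b (n - i) :=
    b.constr_basis A _ n
  have hδ_one : δ 1 = 1 := by
    rw [← hone, hδ, Finset.sum_range_one, hone, Algebra.TensorProduct.one_def]
  have hδ_mul := b.map_mul_of_map_mul_basis <| map_mul_of_structConst
    (fun _ _ _ => structConst_eq_zero_of_add_lt y) (structConst_add y) hmul hδ
  exact ⟨⟨AlgHom.ofLinearMap δ hδ_one hδ_mul, hδ⟩,
    one_tmul_add_tmul_one_sub_smul_tmul_pow y Polynomial.X⟩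

/-- For `q = 1`: (1) on the divided power polynomial ring `B = A⟨ω⟩_{1,y}` (basis `b` with the
divided power multiplication rule), the `A`-linear map `δ` with
`δ(ω^{[n]}) = Σ_{i≤n} ω^{[i]} ⊗ ω^{[n−i]}` is a morphism of `A`-algebras; (2) in
`A[θ] ⊗_A A[θ]` one has, for every `k`,
`(1 ⊗ θ + θ ⊗ 1 − yθ ⊗ θ)^k = Σ_{m+n−i=k, 0≤i≤m≤k} (−1)^i (k choose m)(m choose i) y^i θ^m ⊗ θ^n`. -/
theorem statement7 {R A B : Type*} [CommRing R] [CommRing A] [Algebra R A]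
    [CommRing B] [Algebra A B] (y : A)
    (b : Module.Basis ℕ A B)
    (hb : ∀ m n : ℕ, b m * b n = ∑ i ∈ Finset.range (min m n + 1),
      dpCoeff (1 : A) y m n i • b (m + n - i)) :
    (∃ δ : B →ₐ[A] B ⊗[A] B,
      ∀ n : ℕ, δ (b n) = ∑ i ∈ Finset.range (n + 1), b i ⊗ₜ[A] b (n - i)) ∧
    (∀ k : ℕ,
      ((1 : Polynomial A) ⊗ₜ[A] (Polynomial.X : Polynomial A) +
          (Polynomial.X : Polynomial A) ⊗ₜ[A] (1 : Polynomial A) -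
          y • ((Polynomial.X : Polynomial A) ⊗ₜ[A] (Polynomial.X : Polynomial A))) ^ k =
        ∑ m ∈ Finset.range (k + 1), ∑ i ∈ Finset.range (m + 1),
          ((-1 : A) ^ i * (k.choose m : A) * (m.choose i : A) * y ^ i) •
            (((Polynomial.X : Polynomial A) ^ m) ⊗ₜ[A]
              ((Polynomial.X : Polynomial A) ^ (k - m + i)))) :=
  statement7_general y b hb
end

section
/- Let R be a commutative ring, q ∈ R, A a commutative R-algebra and x ∈ A, and set y := (1−q)x. Then in A[ξ], for every m ∈ ℕ: (x + ξ)^m = Σ_{i=0}^{m} (m choose i)_q x^{m−i} ξ^{(i)}, where ξ^{(i)} := ∏_{j=0}^{i−1}(ξ + (j)_q y) = ∏_{j=0}^{i−1}(x + ξ − q^j x). -/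
lemma qChoose_eq_zero {R : Type*} [CommRing R] (q : R) :
    ∀ n k : ℕ, n < k → qChoose q n k = 0
  | 0, _ + 1, _ => rfl
  | n + 1, k + 1, h => by
    rw [qChoose, qChoose_eq_zero q n k (by omega), qChoose_eq_zero q n (k + 1) (by omega)]
    ring

lemma tp_key {A : Type*} [CommRing A] (q x : A) (i : ℕ) :
    (Polynomial.C x + Polynomial.X) * twistedPow q ((1 - q) * x) i =
      twistedPow q ((1 - q) * x) (i + 1) +
        Polynomial.C (q ^ i * x) * twistedPow q ((1 - q) * x) i := by
  have h : qInt q i * ((1 - q) * x) + q ^ i * x = x := by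
    rw [qInt, ← mul_assoc]
    have hg : (∑ j ∈ Finset.range i, q ^ j) * (1 - q) = 1 - q ^ i := by
      linear_combination - geom_sum_mul q i
    rw [hg]; ring
  have hC : Polynomial.C (qInt q i * ((1 - q) * x)) + Polynomial.C (q ^ i * x)
      = Polynomial.C x := by rw [← Polynomial.C_add, h]
  have hsucc : twistedPow q ((1 - q) * x) (i + 1) =
      twistedPow q ((1 - q) * x) i *
        (Polynomial.X + Polynomial.C (qInt q i * ((1 - q) * x))) :=
    Finset.prod_range_succ _ _
  rw [hsucc]
  linear_combination (- twistedPow q ((1 - q) * x) i) * hC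

lemma qChoose_zero {R : Type*} [CommRing R] (q : R) (n : ℕ) : qChoose q n 0 = 1 := by
  cases n <;> rfl

lemma gauss_main {A : Type*} [CommRing A] (q x : A) (m : ℕ) :
    (Polynomial.C x + Polynomial.X) ^ m =
      ∑ i ∈ Finset.range (m + 1),
        Polynomial.C (qChoose q m i * x ^ (m - i)) * twistedPow q ((1 - q) * x) i := by
  induction m with
  | zero => simp [qChoose, twistedPow]
  | succ m ih =>
    rw [pow_succ', ih, Finset.mul_sum]
    have step : ∀ i ∈ Finset.range (m + 1),
        (Polynomial.C x + Polynomial.X) *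
            (Polynomial.C (qChoose q m i * x ^ (m - i)) * twistedPow q ((1 - q) * x) i) =
          Polynomial.C (qChoose q m i * x ^ (m - i)) * twistedPow q ((1 - q) * x) (i + 1) +
            Polynomial.C (q ^ i * (qChoose q m i * x ^ (m - i)) * x) *
              twistedPow q ((1 - q) * x) i := by
      intro i _
      have h := tp_key q x i
      have hC2 : Polynomial.C (q ^ i * (qChoose q m i * x ^ (m - i)) * x) =
          Polynomial.C (qChoose q m i * x ^ (m - i)) * Polynomial.C (q ^ i * x) := by
        rw [← Polynomial.C_mul]; congr 1; ring
      rw [hC2]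
      linear_combination (Polynomial.C (qChoose q m i * x ^ (m - i))) * h
    rw [Finset.sum_congr rfl step, Finset.sum_add_distrib]
    rw [Finset.sum_range_succ'
      (fun i => Polynomial.C (qChoose q (m + 1) i * x ^ (m + 1 - i)) * twistedPow q ((1 - q) * x) i)]
    rw [Finset.sum_range_succ'
      (fun i => Polynomial.C (q ^ i * (qChoose q m i * x ^ (m - i)) * x) * twistedPow q ((1 - q) * x) i)]
    have hextra : ∑ i ∈ Finset.range m,
        Polynomial.C (q ^ (i + 1) * (qChoose q m (i + 1) * x ^ (m - (i + 1))) * x) *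
          twistedPow q ((1 - q) * x) (i + 1)
        = ∑ i ∈ Finset.range (m + 1),
        Polynomial.C (q ^ (i + 1) * (qChoose q m (i + 1) * x ^ (m - (i + 1))) * x) *
          twistedPow q ((1 - q) * x) (i + 1) := by
      rw [Finset.sum_range_succ, qChoose_eq_zero q m (m + 1) (by omega)]
      simp
    rw [hextra]
    have hzero : Polynomial.C (q ^ 0 * (qChoose q m 0 * x ^ (m - 0)) * x) *
          twistedPow q ((1 - q) * x) 0
        = Polynomial.C (qChoose q (m + 1) 0 * x ^ (m + 1 - 0)) * twistedPow q ((1 - q) * x) 0 := by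
      rw [qChoose_zero, qChoose_zero]
      congr 1
      congr 1
      rw [Nat.sub_zero, Nat.sub_zero, pow_succ]
      ring
    have hsum : ∑ i ∈ Finset.range (m + 1),
        (Polynomial.C (qChoose q m i * x ^ (m - i)) * twistedPow q ((1 - q) * x) (i + 1) +
          Polynomial.C (q ^ (i + 1) * (qChoose q m (i + 1) * x ^ (m - (i + 1))) * x) *
            twistedPow q ((1 - q) * x) (i + 1))
        = ∑ i ∈ Finset.range (m + 1),
          Polynomial.C (qChoose q (m + 1) (i + 1) * x ^ (m + 1 - (i + 1))) *
            twistedPow q ((1 - q) * x) (i + 1) := by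
      apply Finset.sum_congr rfl
      intro i hi
      rw [Finset.mem_range] at hi
      have hrec : qChoose q (m + 1) (i + 1) =
          qChoose q m i + q ^ (i + 1) * qChoose q m (i + 1) := rfl
      rcases Nat.lt_or_ge i m with h | h
      · have h1 : m + 1 - (i + 1) = m - i := by omega
        have h2 : m - (i + 1) + 1 = m - i := by omega
        rw [hrec, h1, ← add_mul, ← Polynomial.C_add]
        congr 2
        rw [← h2, pow_succ]
        ring
      · have h1 : m + 1 - (i + 1) = 0 := by omega
        have h2 : m - i = 0 := by omega
        have h3 : m - (i + 1) = 0 := by omega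
        rw [hrec, qChoose_eq_zero q m (i + 1) (by omega), h1, h2, h3]
        simp
    rw [Finset.sum_add_distrib] at hsum
    linear_combination hsum + hzero

/-- With `y := (1−q)x`, in `A[ξ]` one has
`(x + ξ)^m = Σ_{i=0}^{m} (m choose i)_q x^{m−i} ξ^{(i)}`. -/
theorem statement14 {R A : Type*} [CommRing R] [CommRing A] [Algebra R A]
    (q : R) (x : A) (m : ℕ) :
    (Polynomial.C x + Polynomial.X) ^ m =
      ∑ i ∈ Finset.range (m + 1),
        Polynomial.C (qChoose (algebraMap R A q) m i * x ^ (m - i)) *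
          twistedPow (algebraMap R A q) ((1 - algebraMap R A q) * x) i := by
  exact gauss_main (algebraMap R A q) x m
end
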